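/- arXiv:1907.11952 — 2 statements merged into one kernel-verified Lean document; each statement's English description precedes it below -/
import Mathlib

section
/- If h, φ : ℝ → ℝ are twice differentiable, nowhere zero, and satisfy (n-2)·h·φ' = m·φ·h' for constants n ≥ 2 (a natural number) and m > 0, and moreover satisfy the ODE (n-2)·h·φ'' - m·(φ·h'' + 2·φ'·h') = 0 everywhere, then either φ is constant or h is constant. -/
theorem trivial_if_proportional
    (n : ℕ) (hn : 2 ≤ n) (m : ℝ) (hm : 0 < m)
    (h φ : ℝ → ℝ)
    (hh : Differentiable ℝ h) (hh' : Differentiable ℝ (deriv h))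
    (hφ : Differentiable ℝ φ) (hφ' : Differentiable ℝ (deriv φ))
    (hhne : ∀ t, h t ≠ 0) (hφne : ∀ t, φ t ≠ 0)
    (hprop : ∀ t, ((n : ℝ) - 2) * h t * deriv φ t = m * φ t * deriv h t)
    (hode : ∀ t, ((n : ℝ) - 2) * h t * deriv (deriv φ) t
      - m * (φ t * deriv (deriv h) t + 2 * deriv φ t * deriv h t) = 0) :
    (∃ c, ∀ t, φ t = c) ∨ (∃ c, ∀ t, h t = c) := by
  right
  have hderiv0 : ∀ t, deriv h t = 0 := by
    rcases eq_or_lt_of_le hn with h2 | h2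
    · intro t
      have hn2 : (n : ℝ) = 2 := by exact_mod_cast h2.symm
      have h1 : m * φ t * deriv h t = 0 := by
        rw [← hprop t, hn2]; ring
      rcases mul_eq_zero.mp h1 with h1 | h1
      · rcases mul_eq_zero.mp h1 with h1 | h1
        · exact absurd h1 hm.ne'
        · exact absurd h1 (hφne t)
      · exact h1
    · have hk : (0:ℝ) < (n:ℝ) - 2 := by
        have : (2:ℝ) < (n:ℝ) := by exact_mod_cast h2
        linarith
      have hFG : (fun s => ((n:ℝ) - 2) * h s * deriv φ s)
          = fun s => m * φ s * deriv h s := funext hprop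
      have key : ∀ t, deriv φ t * deriv h t = 0 := by
        intro t
        have H1 : HasDerivAt (fun s => ((n:ℝ) - 2) * h s * deriv φ s)
            ((((n:ℝ) - 2) * deriv h t) * deriv φ t
              + (((n:ℝ) - 2) * h t) * deriv (deriv φ) t) t :=
          (((hh t).hasDerivAt.const_mul ((n:ℝ) - 2)).mul (hφ' t).hasDerivAt)
        have H2 : HasDerivAt (fun s => m * φ s * deriv h s)
            ((m * deriv φ t) * deriv h t + (m * φ t) * deriv (deriv h) t) t :=
          (((hφ t).hasDerivAt.const_mul m).mul (hh' t).hasDerivAt)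
        have hEq : (((n:ℝ) - 2) * deriv h t) * deriv φ t
              + (((n:ℝ) - 2) * h t) * deriv (deriv φ) t
            = (m * deriv φ t) * deriv h t + (m * φ t) * deriv (deriv h) t := by
          rw [← H1.deriv, ← H2.deriv, hFG]
        have hsum : ((n:ℝ) - 2 + m) * (deriv φ t * deriv h t) = 0 := by
          linear_combination hEq - hode t
        rcases mul_eq_zero.mp hsum with hc | hc
        · exact absurd hc (by linarith)
        · exact hc
      intro t
      have e : m * φ t * (deriv h t) ^ 2 = 0 := by
        linear_combination (-(deriv h t)) * hprop t + (((n:ℝ) - 2) * h t) * key t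
      have hne : m * φ t ≠ 0 := mul_ne_zero hm.ne' (hφne t)
      have hsq : (deriv h t) ^ 2 = 0 := by
        rcases mul_eq_zero.mp e with hc | hc
        · exact absurd hc hne
        · exact hc
      exact pow_eq_zero_iff (two_ne_zero) |>.mp hsq
  exact ⟨h 0, fun t => is_const_of_deriv_eq_zero hh hderiv0 t 0⟩
end

section
/- Let G₁, …, Gₙ : ℝ → ℝ be differentiable functions and ε₁,…,εₙ ∈ {1,-1}. Suppose for each i, εᵢ·n·Gᵢ'(xᵢ) = Σₖ εₖ·Gₖ'(xₖ) holds for all (x₁,…,xₙ) ∈ ℝⁿ. Then there exist constants a, bᵢ such that Gᵢ(t) = 2a·εᵢ·t + bᵢ for each i. -/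
/- Subtracting the equations for two indices `i ≠ j` and dividing by `n` gives
`εᵢ Gᵢ'(xᵢ) = εⱼ Gⱼ'(xⱼ)` for every point `x`. Since `xᵢ` and `xⱼ` are independent coordinates,
both sides equal one constant `c`; as `εᵢ² = 1`, each `Gᵢ` has constant derivative `εᵢ c`,
so it is affine with slope `2 a εᵢ`, `a = c / 2`. -/

lemma eq_of_forall_apply_eq_apply {ι α β : Type*} [Nontrivial ι] [DecidableEq ι]
    {f : ι → α → β} (h : ∀ i j (x : ι → α), f i (x i) = f j (x j)) (i j : ι) (s t : α) :
    f i s = f j t := by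
  by_cases hij : i = j
  · subst hij
    obtain ⟨k, hki⟩ := exists_ne i
    have hs := h i k (Function.update (fun _ => s) k t)
    have ht := h i k (fun _ => t)
    simp only [Function.update_self, Function.update_of_ne hki.symm] at hs
    exact hs.trans ht.symm
  · simpa [Function.update_of_ne (Ne.symm hij)] using h i j (Function.update (fun _ => t) i s)

lemma eq_mul_add_of_deriv_eq {f : ℝ → ℝ} {m : ℝ} (hf : Differentiable ℝ f)
    (hf' : ∀ s, deriv f s = m) (t : ℝ) : f t = m * t + f 0 := by
  have hg : Differentiable ℝ (fun s => f s - m * s) := by fun_prop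
  have hg' (s : ℝ) : deriv (fun s => f s - m * s) s = 0 := by
    rw [deriv_fun_sub (hf s) (by fun_prop), deriv_const_mul_field', deriv_id'', hf']
    ring
  have := is_const_of_deriv_eq_zero hg hg' t 0
  simp only [mul_zero, sub_zero] at this
  linarith

theorem separated_derivative_equation_affine
    (n : ℕ) (hn : 2 ≤ n)
    (ε : Fin n → ℝ) (hε : ∀ i, ε i = 1 ∨ ε i = -1)
    (G : Fin n → ℝ → ℝ) (hG : ∀ i, Differentiable ℝ (G i))
    (heq : ∀ i : Fin n, ∀ x : Fin n → ℝ,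
      ε i * (n : ℝ) * deriv (G i) (x i) = ∑ k, ε k * deriv (G k) (x k)) :
    ∃ a : ℝ, ∃ b : Fin n → ℝ, ∀ i t, G i t = 2 * a * ε i * t + b i := by
  have : Nontrivial (Fin n) := Fin.nontrivial_iff_two_le.mpr hn
  have hn0 : (n : ℝ) ≠ 0 := by positivity
  have hsep : ∀ i j (x : Fin n → ℝ),
      ε i * deriv (G i) (x i) = ε j * deriv (G j) (x j) := fun i j x =>
    mul_right_cancel₀ hn0 (by linear_combination heq i x - heq j x)
  obtain ⟨i₀⟩ : Nonempty (Fin n) := inferInstance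
  set c := ε i₀ * deriv (G i₀) 0
  refine ⟨c / 2, fun i => G i 0, fun i t => ?_⟩
  have hderiv (s : ℝ) : deriv (G i) s = c * ε i := by
    have hεi : ε i * ε i = 1 := by rcases hε i with h | h <;> rw [h] <;> norm_num
    linear_combination ε i * eq_of_forall_apply_eq_apply (f := fun i s => ε i * deriv (G i) s)
      hsep i i₀ s 0 - deriv (G i) s * hεi
  rw [eq_mul_add_of_deriv_eq (hG i) hderiv t]
  ring
end
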